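/- For all p, q ∈ ℝ and α, β, γ, δ ∈ ℂ, the Grassmann-valued transition probability, i.e. the product in Λ of the amplitude (ψ† q γ δ paired with ψ p α β) with the reversed amplitude (ψ† p α β paired with ψ q γ δ), equals Complex.normSq((conj γ)*α + (conj δ)*β) • (1 + (p - q)²•E). -/
import Mathlib

noncomputable section

abbrev Λ : Type := ExteriorAlgebra ℂ (Fin 2 → ℂ)

def η : Λ := ExteriorAlgebra.ι ℂ (Pi.single 0 1)

def η' : Λ := ExteriorAlgebra.ι ℂ (Pi.single 1 1)

def E : Λ := η * η'

/-- The superqubit ket `ψ p α β`. -/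
def ψ (p : ℝ) (α β : ℂ) : Fin 3 → Λ :=
  ![α • (1 + ((p ^ 2 / 2 : ℝ) : ℂ) • E),
    β • (1 + ((p ^ 2 / 2 : ℝ) : ℂ) • E),
    (p : ℂ) • (α • η - β • η')]

/-- The superqubit bra `ψ† p α β`. -/
def ψbra (p : ℝ) (α β : ℂ) : Fin 3 → Λ :=
  ![(starRingEnd ℂ α) • (1 + ((p ^ 2 / 2 : ℝ) : ℂ) • E),
    (starRingEnd ℂ β) • (1 + ((p ^ 2 / 2 : ℝ) : ℂ) • E),
    (p : ℂ) • ((starRingEnd ℂ α) • η' + (starRingEnd ℂ β) • η)]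

lemma hE : η * η' = E := rfl
lemma hηη : η * η = 0 := ExteriorAlgebra.ι_sq_zero _
lemma hη'η' : η' * η' = 0 := ExteriorAlgebra.ι_sq_zero _
lemma hswap : η' * η = -E := by
  have := ExteriorAlgebra.ι_add_mul_swap (R := ℂ) (Pi.single 0 1 : Fin 2 → ℂ) (Pi.single 1 1)
  rw [E, η, η']; linear_combination (norm := noncomm_ring) this
lemma hEE : E * E = 0 := by rw [E]; rw [show η * η' * (η * η') = η * (η' * η) * η' by noncomm_ring, hswap, E]; noncomm_ring [hη'η']
lemma hηE : η * E = 0 := by rw [E, ← mul_assoc, hηη, zero_mul]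
lemma hEη : E * η = 0 := by rw [E, mul_assoc, hswap, mul_neg, E, ← mul_assoc, hηη, zero_mul, neg_zero]
lemma hη'E : η' * E = 0 := by rw [E, ← mul_assoc, hswap, E]; noncomm_ring [hη'η']
lemma hEη' : E * η' = 0 := by rw [E, mul_assoc, hη'η', mul_zero]

lemma amp (p q : ℝ) (α β γ δ : ℂ) :
    (∑ i : Fin 3, ψbra q γ δ i * ψ p α β i) =
      ((starRingEnd ℂ γ) * α + (starRingEnd ℂ δ) * β) • (1 + (((p - q) ^ 2 / 2 : ℝ) : ℂ) • E) := by
  simp only [ψ, ψbra, Fin.sum_univ_three, Matrix.cons_val_zero, Matrix.cons_val_one,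
    Matrix.head_cons, Matrix.cons_val_two, Matrix.tail_cons]
  simp only [mul_add, add_mul, mul_sub, sub_mul, smul_mul_assoc, mul_smul_comm, smul_smul,
    one_mul, mul_one, hE, hηη, hη'η', hswap, hEE, hηE, hEη, hη'E, hEη', smul_zero,
    smul_add, smul_sub, smul_neg]
  match_scalars <;> push_cast <;> ring

theorem transition_probability (p q : ℝ) (α β γ δ : ℂ) :
    (∑ i : Fin 3, ψbra q γ δ i * ψ p α β i) *
        (∑ i : Fin 3, ψbra p α β i * ψ q γ δ i) =
      ((Complex.normSq ((starRingEnd ℂ γ) * α + (starRingEnd ℂ δ) * β) : ℂ)) •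
        (1 + (((p - q) ^ 2 : ℝ) : ℂ) • E) := by
  rw [amp p q α β γ δ, amp q p γ δ α β]
  set s := (starRingEnd ℂ γ) * α + (starRingEnd ℂ δ) * β with hs
  have h2 : (starRingEnd ℂ α) * γ + (starRingEnd ℂ β) * δ = starRingEnd ℂ s := by
    simp [hs, mul_comm]
  rw [h2]
  have hq : (q - p) ^ 2 = (p - q) ^ 2 := by ring
  rw [hq]
  have hns : (Complex.normSq s : ℂ) = s * starRingEnd ℂ s := (Complex.mul_conj s).symm
  rw [hns]
  simp only [smul_mul_smul_comm, mul_add, add_mul, one_mul, mul_one, smul_mul_assoc,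
    mul_smul_comm, smul_smul, hEE, smul_zero, add_zero]
  match_scalars <;> push_cast <;> ring
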